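/- arXiv:1403.2195 — 3 statements merged into one kernel-verified Lean document; each statement's English description precedes it below -/
import Mathlib

section
/- (Theorem 2.2) For n = 2^k with k ∈ ℕ and any positive integer K ≥ 1, let f : (0,∞) → ℝ be piecewise continuous and of exponential order exp(α^n x^n) as x → ∞ for some α > 0, and let F(y) = L_n{f; y} = ∫₀^∞ x^{n−1} exp(−x^n y^n) f(x) dx for y > α. Then for every y > α, L_n{x^{Kn} f(x); y} = ((−1)^K/n^K) (δ̄_y^K F)(y), i.e. ∫₀^∞ x^{Kn + n − 1} exp(−x^n y^n) f(x) dx = ((−1)^K/n^K) times the K-fold iterate of the operator F ↦ (y ↦ F′(y)/y^{n−1}) applied to F, evaluated at y. -/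
open MeasureTheory Set Filter Real
open scoped Topology

/-!
Differentiating `F(y) = ∫₀^∞ x^(n-1) exp(-xⁿyⁿ) f(x) dx` under the integral sign brings down the
factor `-n y^(n-1) xⁿ`, so `δ̄_y` multiplies the integrand by `-n xⁿ`, and `K` applications of it
give `(-n)ᴷ Lₙ{x^(Kn) f; y}`. Differentiation under the integral sign is justified by dominated
convergence: the growth bound `|f x| ≤ A exp(a xⁿ)` leaves a factor `exp(-(b - a) xⁿ)`, integrable
against every power of `x`, as long as `yⁿ` stays above some `b > a`.
-/

theorem exists_forall_pos_abs_le_mul_of_eventually_le {f w : ℝ → ℝ} {M : ℝ}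
    (hloc : ∀ b > (0 : ℝ), ∃ C : ℝ, ∀ x ∈ Ioc (0 : ℝ) b, |f x| ≤ C)
    (hord : ∀ᶠ x in atTop, |f x| ≤ M * w x) (hw : ∀ x > (0 : ℝ), 1 ≤ w x) :
    ∃ A : ℝ, ∀ x > (0 : ℝ), |f x| ≤ A * w x := by
  obtain ⟨b₀, hb₀⟩ := eventually_atTop.mp hord
  obtain ⟨C, hC⟩ := hloc (max b₀ 1) (by positivity)
  have hC0 : 0 ≤ C := (abs_nonneg _).trans (hC 1 ⟨one_pos, le_max_right _ _⟩)
  refine ⟨max C M, fun x hx => ?_⟩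
  have hwx : 1 ≤ w x := hw x hx
  rcases le_or_gt x (max b₀ 1) with hxb | hxb
  · calc |f x| ≤ C := hC x ⟨hx, hxb⟩
      _ ≤ max C M := le_max_left _ _
      _ ≤ max C M * w x := le_mul_of_one_le_right (hC0.trans (le_max_left _ _)) hwx
  · calc |f x| ≤ M * w x := hb₀ x ((le_max_left _ _).trans hxb.le)
      _ ≤ max C M * w x := mul_le_mul_of_nonneg_right (le_max_right _ _) (by linarith)

theorem integrableOn_pow_mul_exp_neg_mul_pow (m : ℕ) {n : ℕ} (hn : 0 < n) {d : ℝ} (hd : 0 < d) :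
    IntegrableOn (fun x : ℝ => x ^ m * exp (-d * x ^ n)) (Ioi 0) := by
  have h := integrableOn_rpow_mul_exp_neg_mul_rpow (s := m) (p := n)
    (neg_one_lt_zero.trans_le m.cast_nonneg) (by exact_mod_cast hn) hd
  simpa only [rpow_natCast] using h

theorem norm_pow_mul_exp_mul_le {x y a b c A : ℝ} (m n : ℕ) (hx : 0 < x) (hy : b ≤ y ^ n)
    (hc : |c| ≤ A * exp (a * x ^ n)) :
    ‖x ^ m * exp (-(x ^ n * y ^ n)) * c‖ ≤ A * (x ^ m * exp (-(b - a) * x ^ n)) := by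
  have hexp : exp (-(x ^ n * y ^ n)) ≤ exp (-(x ^ n * b)) := by gcongr
  calc ‖x ^ m * exp (-(x ^ n * y ^ n)) * c‖ = x ^ m * exp (-(x ^ n * y ^ n)) * |c| := by
        rw [norm_mul, norm_mul, norm_of_nonneg (by positivity), norm_of_nonneg (by positivity),
          norm_eq_abs]
    _ ≤ x ^ m * exp (-(x ^ n * b)) * (A * exp (a * x ^ n)) := by gcongr
    _ = A * (x ^ m * exp (-(b - a) * x ^ n)) := by
        rw [show -(b - a) * x ^ n = -(x ^ n * b) + a * x ^ n by ring, exp_add]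
        ring

theorem hasDerivAt_pow_mul_exp_neg_mul_pow (m n : ℕ) (x y c : ℝ) :
    HasDerivAt (fun y => x ^ m * exp (-(x ^ n * y ^ n)) * c)
      (-(n * y ^ (n - 1)) * (x ^ (m + n) * exp (-(x ^ n * y ^ n)) * c)) y := by
  have h := ((((hasDerivAt_pow n y).const_mul (x ^ n)).neg.exp).const_mul (x ^ m)).mul_const c
  refine h.congr_deriv ?_
  simp only [Pi.neg_apply]
  ring

/-- `Lₙ{x^(jn) f; y} = lnMoment n (j * n + n - 1) f y`. -/
noncomputable def lnMoment (n m : ℕ) (f : ℝ → ℝ) (y : ℝ) : ℝ :=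
  ∫ x in Ioi (0 : ℝ), x ^ m * exp (-(x ^ n * y ^ n)) * f x

noncomputable def deltaBar (n : ℕ) (G : ℝ → ℝ) (t : ℝ) : ℝ :=
  deriv G t / t ^ (n - 1)

section GrowthBound

variable {n : ℕ} {f : ℝ → ℝ} {a A : ℝ}

theorem integrableOn_lnMoment_integrand (hn : 0 < n) (hf : Measurable f)
    (hA : ∀ x > (0 : ℝ), |f x| ≤ A * exp (a * x ^ n)) (m : ℕ) {z : ℝ} (hz : a < z ^ n) :
    IntegrableOn (fun x => x ^ m * exp (-(x ^ n * z ^ n)) * f x) (Ioi 0) := by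
  refine ((integrableOn_pow_mul_exp_neg_mul_pow m hn (sub_pos.2 hz)).const_mul A).mono' ?_ ?_
  · exact (by fun_prop : Measurable _).aestronglyMeasurable
  · filter_upwards [self_mem_ae_restrict measurableSet_Ioi] with x hx
    exact norm_pow_mul_exp_mul_le m n hx le_rfl (hA x hx)

theorem hasDerivAt_lnMoment (hn : 0 < n) (hf : Measurable f)
    (hA : ∀ x > (0 : ℝ), |f x| ≤ A * exp (a * x ^ n)) (m : ℕ) {z : ℝ} (hz : a < z ^ n) :
    HasDerivAt (lnMoment n m f) (-(n * z ^ (n - 1)) * lnMoment n (m + n) f z) z := by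
  obtain ⟨b, hab, hbz⟩ := exists_between hz
  set s : Set ℝ := {y | b < y ^ n} ∩ Ioo (z - 1) (z + 1)
  have hs : s ∈ 𝓝 z := inter_mem
    ((isOpen_lt continuous_const (continuous_pow n)).mem_nhds (show z ∈ {y | b < y ^ n} from hbz))
    (Ioo_mem_nhds (sub_one_lt z) (lt_add_one z))
  have hbound : ∀ᵐ x ∂volume.restrict (Ioi (0 : ℝ)), ∀ y ∈ s,
      ‖-(n * y ^ (n - 1)) * (x ^ (m + n) * exp (-(x ^ n * y ^ n)) * f x)‖ ≤
        n * (|z| + 1) ^ (n - 1) * (A * (x ^ (m + n) * exp (-(b - a) * x ^ n))) := by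
    filter_upwards [self_mem_ae_restrict measurableSet_Ioi] with x hx y ⟨hby, hzy, hyz⟩
    have hy : |y| ≤ |z| + 1 := abs_le.2 ⟨by linarith [neg_abs_le z], by linarith [le_abs_self z]⟩
    rw [norm_mul, norm_neg, norm_mul, norm_pow, Real.norm_natCast, norm_eq_abs]
    gcongr
    exact norm_pow_mul_exp_mul_le (m + n) n hx hby.le (hA x hx)
  have key := hasDerivAt_integral_of_dominated_loc_of_deriv_le
    (F := fun y x => x ^ m * exp (-(x ^ n * y ^ n)) * f x) hs
    (Eventually.of_forall fun y => (by fun_prop : Measurable _).aestronglyMeasurable)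
    (integrableOn_lnMoment_integrand hn hf hA m hz)
    ((by fun_prop : Measurable _).aestronglyMeasurable) hbound
    (((integrableOn_pow_mul_exp_neg_mul_pow (m + n) hn (sub_pos.2 hab)).const_mul A).const_mul _)
    (ae_of_all _ fun x y _ => hasDerivAt_pow_mul_exp_neg_mul_pow m n x y (f x))
  exact key.2.congr_deriv (integral_const_mul _ _)

theorem eqOn_iterate_deltaBar_lnMoment (hn : 0 < n) (hf : Measurable f)
    (hA : ∀ x > (0 : ℝ), |f x| ≤ A * exp (a * x ^ n)) (j : ℕ) :
    EqOn ((deltaBar n)^[j] (lnMoment n (n - 1) f))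
      (fun z => (-(n : ℝ)) ^ j * lnMoment n (j * n + n - 1) f z) {z | 0 < z ∧ a < z ^ n} := by
  induction j with
  | zero => intro z _; simp
  | succ j ih =>
    intro z ⟨hz0, hz⟩
    have hU : IsOpen {z : ℝ | 0 < z ∧ a < z ^ n} :=
      isOpen_Ioi.inter (isOpen_lt continuous_const (continuous_pow n))
    have hderiv : deriv ((deltaBar n)^[j] (lnMoment n (n - 1) f)) z =
        (-(n : ℝ)) ^ j * (-(n * z ^ (n - 1)) * lnMoment n ((j + 1) * n + n - 1) f z) := by
      rw [(eventuallyEq_of_mem (hU.mem_nhds ⟨hz0, hz⟩) ih).deriv_eq]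
      have hexp : j * n + n - 1 + n = (j + 1) * n + n - 1 := by rw [add_mul, one_mul]; omega
      rw [← hexp]
      exact ((hasDerivAt_lnMoment hn hf hA _ hz).const_mul _).deriv
    rw [Function.iterate_succ_apply', deltaBar, hderiv]
    field_simp
    ring

end GrowthBound

theorem Ln_mul_pow_iterate_general (k n K : ℕ) (hn : n = 2 ^ k)
    (f : ℝ → ℝ) (α M : ℝ) (hα : 0 < α)
    (hf : Measurable f)
    (hloc : ∀ b > (0 : ℝ), ∃ C : ℝ, ∀ x ∈ Ioc (0 : ℝ) b, |f x| ≤ C)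
    (hord : ∀ᶠ x in atTop, |f x| ≤ M * Real.exp (α ^ n * x ^ n))
    (F : ℝ → ℝ)
    (hF : F = fun y => ∫ x in Ioi (0 : ℝ), x ^ (n - 1) * Real.exp (-(x ^ n * y ^ n)) * f x) :
    ∀ y : ℝ, α < y →
      ∫ x in Ioi (0 : ℝ), x ^ (K * n + n - 1) * Real.exp (-(x ^ n * y ^ n)) * f x
        = ((-1 : ℝ) ^ K / n ^ K) *
            ((fun (G : ℝ → ℝ) => fun t => deriv G t / t ^ (n - 1))^[K] F) y := by
  intro y hy
  have hn0 : 0 < n := hn ▸ Nat.two_pow_pos k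
  obtain ⟨A, hA⟩ := exists_forall_pos_abs_le_mul_of_eventually_le hloc hord
    fun x hx => one_le_exp (by positivity)
  have hiter := eqOn_iterate_deltaBar_lnMoment hn0 hf hA K
    ⟨hα.trans hy, pow_lt_pow_left₀ hy hα.le hn0.ne'⟩
  subst hF
  change lnMoment n (K * n + n - 1) f y = _ * (deltaBar n)^[K] (lnMoment n (n - 1) f) y
  rw [hiter, neg_pow (n : ℝ)]
  field_simp
  rw [← pow_mul, pow_mul', neg_one_sq, one_pow, mul_one]

/-- Theorem 2.2: for `n = 2^k` and `K ≥ 1`, if `f` is piecewise continuous on `(0,∞)`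
(formalized: measurable and bounded on bounded subintervals) and of exponential order
`exp(αⁿ xⁿ)` for some `α > 0`, and `F(y) = Lₙ{f; y}`, then for every `y > α`,
`Lₙ{x^{Kn} f(x); y} = ((-1)ᴷ/nᴷ) (δ̄_yᴷ F)(y)`, where `δ̄_y` is the operator
`F ↦ (y ↦ F'(y)/y^{n-1})`. -/
theorem Ln_mul_pow_iterate (k n K : ℕ) (hn : n = 2 ^ k) (hK : 1 ≤ K)
    (f : ℝ → ℝ) (α M : ℝ) (hα : 0 < α) (hM : 0 < M)
    (hf : Measurable f)
    (hloc : ∀ b > (0 : ℝ), ∃ C : ℝ, ∀ x ∈ Ioc (0 : ℝ) b, |f x| ≤ C)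
    (hord : ∀ᶠ x in atTop, |f x| ≤ M * Real.exp (α ^ n * x ^ n))
    (F : ℝ → ℝ)
    (hF : F = fun y => ∫ x in Ioi (0 : ℝ), x ^ (n - 1) * Real.exp (-(x ^ n * y ^ n)) * f x) :
    ∀ y : ℝ, α < y →
      ∫ x in Ioi (0 : ℝ), x ^ (K * n + n - 1) * Real.exp (-(x ^ n * y ^ n)) * f x
        = ((-1 : ℝ) ^ K / n ^ K) *
            ((fun (G : ℝ → ℝ) => fun t => deriv G t / t ^ (n - 1))^[K] F) y :=
  Ln_mul_pow_iterate_general k n K hn f α M hα hf hloc hord F hF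
end

section
/- For n = 2^k with k ∈ ℕ, any a > 0, and any y > 0, one has ∫₀^∞ x^{n−1} exp(−x^n y^n) · (n/a^n) sin(a^n x^n) dx = 1/(y^{2n} + a^{2n}); equivalently, the function x ↦ (n/a^n) sin(a^n x^n) is the inverse L_n-transform of y ↦ 1/(y^{2n} + a^{2n}). -/
/-!
Substituting `u = xⁿ` turns the `Lₙ`-transform into the Laplace transform of `u ↦ sin (aⁿ u)`
at `yⁿ`, which is `aⁿ / (y²ⁿ + a²ⁿ)`. That Laplace transform is the imaginary part of
`∫₀^∞ e^{(-b + ic)u} du = 1 / (b - ic)`.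
-/

open MeasureTheory Set Complex

theorem integral_exp_neg_mul_mul_sin_Ioi {b : ℝ} (hb : 0 < b) (c : ℝ) :
    ∫ u in Ioi (0 : ℝ), Real.exp (-(b * u)) * Real.sin (c * u) = c / (b ^ 2 + c ^ 2) := by
  have hre : (-b + c * I).re < 0 := by simpa using hb
  have him (u : ℝ) :
      Real.exp (-(b * u)) * Real.sin (c * u) = RCLike.im (exp ((-b + c * I) * u)) := by
    simp [exp_im]
  simp_rw [him]
  rw [integral_im (integrableOn_exp_mul_complex_Ioi hre 0), integral_exp_mul_complex_Ioi hre]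
  simp [normSq_apply, neg_div, sq]

theorem integral_pow_sub_one_smul_comp_pow_Ioi {E : Type*} [NormedAddCommGroup E]
    [NormedSpace ℝ E] (g : ℝ → E) {n : ℕ} (hn : n ≠ 0) :
    ∫ x in Ioi (0 : ℝ), (n * x ^ (n - 1)) • g (x ^ n) = ∫ u in Ioi (0 : ℝ), g u := by
  rw [← integral_comp_rpow_Ioi_of_pos (g := g) (p := n) (by positivity)]
  refine setIntegral_congr_fun measurableSet_Ioi fun x _ => ?_
  rw [← Nat.cast_pred (Nat.pos_of_ne_zero hn), Real.rpow_natCast, Real.rpow_natCast]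

/-- For `n = 2^k`, `a > 0` and `y > 0`, the function `x ↦ (n/aⁿ) sin(aⁿ xⁿ)` is the inverse
`Lₙ`-transform of `y ↦ 1/(y^{2n} + a^{2n})`:
`Lₙ{(n/aⁿ) sin(aⁿ xⁿ); y} = 1/(y^{2n} + a^{2n})`. -/
theorem Ln_inv_sin (k n : ℕ) (hn : n = 2 ^ k) (a y : ℝ) (ha : 0 < a) (hy : 0 < y) :
    ∫ x in Ioi (0 : ℝ),
        x ^ (n - 1) * Real.exp (-(x ^ n * y ^ n)) * ((n / a ^ n) * Real.sin (a ^ n * x ^ n))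
      = 1 / (y ^ (2 * n) + a ^ (2 * n)) := by
  have hn0 : n ≠ 0 := hn ▸ pow_ne_zero k two_ne_zero
  calc _ = (a ^ n)⁻¹ * ∫ x in Ioi (0 : ℝ), (n * x ^ (n - 1)) •
          (Real.exp (-(y ^ n * x ^ n)) * Real.sin (a ^ n * x ^ n)) := by
        rw [← integral_const_mul]
        congr 1 with x
        rw [smul_eq_mul, mul_comm (x ^ n)]
        ring
    _ = (a ^ n)⁻¹ * (a ^ n / ((y ^ n) ^ 2 + (a ^ n) ^ 2)) := by
        rw [integral_pow_sub_one_smul_comp_pow_Ioi (fun u => Real.exp (-(y ^ n * u)) *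
          Real.sin (a ^ n * u)) hn0, integral_exp_neg_mul_mul_sin_Ioi (pow_pos hy n)]
    _ = 1 / (y ^ (2 * n) + a ^ (2 * n)) := by
        rw [pow_mul', pow_mul', ← mul_div_assoc, inv_mul_cancel₀ (pow_pos ha n).ne']
end

section
/- For n = 2^k with k ∈ ℕ, any a > 0, and any y > 0, defining the δ̄-derivative with respect to y as (δ̄_y F)(y) = (1/y^{n−1}) F′(y), the L_n-transform F(y) = ∫₀^∞ x^{n−1} exp(−x^n y^n) f(x) dx of any piecewise continuous f of exponential order exp(α^n x^n) (α > 0) is differentiable on (α, ∞) and satisfies (δ̄_y F)(y) = −n ∫₀^∞ x^{2n−1} exp(−x^n y^n) f(x) dx for all y > α. -/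
open MeasureTheory Set Filter

/-!
Differentiation under the integral sign. The derivative in `y` of the kernel
`x ^ m * exp (-(xⁿ yⁿ))` is `-n yⁿ⁻¹` times the kernel of weight `x ^ (m + n)`. For `y` near
`y₀ > α`, say `y > c > α`, all these kernels are dominated by `x ^ (m + n) * exp (-(xⁿ cⁿ))`,
and this bound times `|f|` is integrable on `(0, ∞)`: `f` is bounded on `(0, b]`, and beyond `b`
the factor `exp (-(cⁿ - αⁿ) xⁿ)` beats the growth of `f`.
-/

noncomputable def lnKernel (n m : ℕ) (y x : ℝ) : ℝ := x ^ m * Real.exp (-(x ^ n * y ^ n))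

/-- `lnTransform n (n - 1)` is the `Lₙ`-transform; general weights `x ^ m` are needed because
differentiating in `y` raises the weight by `n`. -/
noncomputable def lnTransform (n m : ℕ) (f : ℝ → ℝ) (y : ℝ) : ℝ :=
  ∫ x in Ioi (0 : ℝ), lnKernel n m y x * f x

section Kernel

variable {n m : ℕ} {f : ℝ → ℝ} {x y c : ℝ}

lemma continuous_lnKernel (n m : ℕ) (y : ℝ) : Continuous (lnKernel n m y) := by
  unfold lnKernel; fun_prop

lemma lnKernel_nonneg (hx : 0 ≤ x) : 0 ≤ lnKernel n m y x := by
  unfold lnKernel; positivity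

lemma lnKernel_le_of_le (hc : 0 ≤ c) (hcy : c ≤ y) (hx : 0 ≤ x) :
    lnKernel n m y x ≤ lnKernel n m c x := by
  unfold lnKernel
  gcongr

lemma norm_lnKernel_mul_le (hc : 0 ≤ c) (hcy : c ≤ y) (hx : 0 ≤ x) :
    ‖lnKernel n m y x * f x‖ ≤ lnKernel n m c x * |f x| := by
  rw [norm_mul, Real.norm_of_nonneg (lnKernel_nonneg hx), Real.norm_eq_abs]
  exact mul_le_mul_of_nonneg_right (lnKernel_le_of_le hc hcy hx) (abs_nonneg _)

lemma hasDerivAt_lnKernel (n m : ℕ) (x y : ℝ) :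
    HasDerivAt (fun y => lnKernel n m y x) (-n * y ^ (n - 1) * lnKernel n (m + n) y x) y := by
  unfold lnKernel
  refine ((((hasDerivAt_pow n y).const_mul (x ^ n)).neg.exp).const_mul (x ^ m)).congr_deriv ?_
  simp only [Pi.neg_apply, pow_add]
  ring

end Kernel

section Integrability

variable {n : ℕ} {f : ℝ → ℝ} {α M b c C : ℝ}

lemma integrableOn_Ioc_lnKernel_mul (m : ℕ) (hf : Measurable f)
    (hC : ∀ x ∈ Ioc (0 : ℝ) b, |f x| ≤ C) :
    IntegrableOn (fun x => lnKernel n m c x * f x) (Ioc 0 b) := by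
  have hf_int : IntegrableOn f (Ioc 0 b) :=
    Measure.integrableOn_of_bounded (M := C) measure_Ioc_lt_top.ne hf.aestronglyMeasurable
      ((ae_restrict_mem measurableSet_Ioc).mono fun x hx => (Real.norm_eq_abs _).trans_le (hC x hx))
  exact hf_int.continuousOn_mul_of_subset (continuous_lnKernel n m c).continuousOn isCompact_Icc
    measurableSet_Ioc Ioc_subset_Icc_self

lemma integrableOn_Ioi_lnKernel_mul (hn : 0 < n) (m : ℕ) (hα : 0 ≤ α) (hc : α < c)
    (hb : 0 ≤ b) (hf : Measurable f) (hord : ∀ x ≥ b, |f x| ≤ M * Real.exp (α ^ n * x ^ n)) :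
    IntegrableOn (fun x => lnKernel n m c x * f x) (Ioi b) := by
  set δ := c ^ n - α ^ n
  have hδ : 0 < δ := sub_pos.2 (pow_lt_pow_left₀ hc hα hn.ne')
  have h_dom : IntegrableOn (fun x : ℝ => M * (x ^ m * Real.exp (-δ * x ^ n))) (Ioi b) := by
    have h := integrableOn_rpow_mul_exp_neg_mul_rpow (s := m) (p := n)
      (neg_one_lt_zero.trans_le m.cast_nonneg) (Nat.cast_pos.2 hn) hδ
    simp only [Real.rpow_natCast] at h
    exact (h.mono_set (Ioi_subset_Ioi hb)).const_mul M
  refine h_dom.mono' ((continuous_lnKernel n m c).measurable.mul hf).aestronglyMeasurable ?_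
  filter_upwards [ae_restrict_mem measurableSet_Ioi] with x (hx : b < x)
  have hx0 : 0 ≤ x := hb.trans hx.le
  calc ‖lnKernel n m c x * f x‖ = lnKernel n m c x * |f x| := by
        rw [Real.norm_eq_abs, abs_mul, abs_of_nonneg (lnKernel_nonneg hx0)]
    _ ≤ lnKernel n m c x * (M * Real.exp (α ^ n * x ^ n)) :=
        mul_le_mul_of_nonneg_left (hord x hx.le) (lnKernel_nonneg hx0)
    _ = M * (x ^ m * Real.exp (-δ * x ^ n)) := by
        rw [lnKernel, show -δ * x ^ n = -(x ^ n * c ^ n) + α ^ n * x ^ n by ring, Real.exp_add]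
        ring

lemma integrableOn_lnKernel_mul (hn : 0 < n) (m : ℕ) (hα : 0 ≤ α) (hc : α < c)
    (hf : Measurable f) (hloc : ∀ b > (0 : ℝ), ∃ C : ℝ, ∀ x ∈ Ioc (0 : ℝ) b, |f x| ≤ C)
    (hord : ∀ᶠ x in atTop, |f x| ≤ M * Real.exp (α ^ n * x ^ n)) :
    IntegrableOn (fun x => lnKernel n m c x * f x) (Ioi 0) := by
  obtain ⟨b₀, hb₀⟩ := eventually_atTop.1 hord
  set b := max b₀ 1
  have hb : 0 < b := lt_max_of_lt_right one_pos
  obtain ⟨C, hC⟩ := hloc b hb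
  rw [← Ioc_union_Ioi_eq_Ioi hb.le]
  exact (integrableOn_Ioc_lnKernel_mul m hf hC).union
    (integrableOn_Ioi_lnKernel_mul hn m hα hc hb.le hf fun x hx => hb₀ x (le_of_max_le_left hx))

end Integrability

theorem hasDerivAt_lnTransform {n : ℕ} {f : ℝ → ℝ} {α M y₀ : ℝ} (hn : 0 < n) (m : ℕ)
    (hα : 0 ≤ α) (hf : Measurable f)
    (hloc : ∀ b > (0 : ℝ), ∃ C : ℝ, ∀ x ∈ Ioc (0 : ℝ) b, |f x| ≤ C)
    (hord : ∀ᶠ x in atTop, |f x| ≤ M * Real.exp (α ^ n * x ^ n)) (hy₀ : α < y₀) :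
    HasDerivAt (lnTransform n m f) (-n * y₀ ^ (n - 1) * lnTransform n (m + n) f y₀) y₀ := by
  obtain ⟨c, hαc, hcy₀⟩ := exists_between hy₀
  have hc : 0 ≤ c := hα.trans hαc.le
  have hs : Ioo c (y₀ + 1) ∈ nhds y₀ := Ioo_mem_nhds hcy₀ (lt_add_one y₀)
  have h_bound : ∀ᵐ x ∂volume.restrict (Ioi 0), ∀ y ∈ Ioo c (y₀ + 1),
      ‖-n * y ^ (n - 1) * (lnKernel n (m + n) y x * f x)‖ ≤
        n * (y₀ + 1) ^ (n - 1) * (lnKernel n (m + n) c x * |f x|) := by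
    filter_upwards [ae_restrict_mem measurableSet_Ioi] with x (hx : 0 < x) y ⟨hcy, hy⟩
    have hy0 : 0 ≤ y := hc.trans hcy.le
    rw [norm_mul (-(n : ℝ) * _), norm_mul, norm_neg, Real.norm_natCast, norm_pow,
      Real.norm_of_nonneg hy0]
    gcongr
    · exact mul_nonneg n.cast_nonneg (pow_nonneg (by linarith) _)
    · exact norm_lnKernel_mul_le hc hcy.le hx.le
  have h_bound_int := (integrableOn_lnKernel_mul hn (m + n) hα hαc hf.abs
    (by simpa only [abs_abs] using hloc) (by simpa only [abs_abs] using hord)).const_mul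
    (n * (y₀ + 1) ^ (n - 1))
  have h_diff : ∀ᵐ x ∂volume.restrict (Ioi 0), ∀ y ∈ Ioo c (y₀ + 1),
      HasDerivAt (fun y => lnKernel n m y x * f x)
        (-n * y ^ (n - 1) * (lnKernel n (m + n) y x * f x)) y :=
    Eventually.of_forall fun x y _ =>
      ((hasDerivAt_lnKernel n m x y).mul_const (f x)).congr_deriv (mul_assoc _ _ _)
  have h_meas (y : ℝ) : AEStronglyMeasurable (fun x => lnKernel n m y x * f x)
      (volume.restrict (Ioi 0)) :=
    ((continuous_lnKernel n m y).measurable.mul hf).aestronglyMeasurable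
  have h := (hasDerivAt_integral_of_dominated_loc_of_deriv_le hs (Eventually.of_forall h_meas)
    (integrableOn_lnKernel_mul hn m hα hy₀ hf hloc hord)
    (((continuous_lnKernel n (m + n) y₀).measurable.mul hf).const_mul
      (-n * y₀ ^ (n - 1))).aestronglyMeasurable h_bound h_bound_int h_diff).2
  rwa [integral_const_mul] at h

theorem Ln_deriv_general (k n : ℕ) (hn : n = 2 ^ k)
    (f : ℝ → ℝ) (α M : ℝ) (hα : 0 < α)
    (hf : Measurable f)
    (hloc : ∀ b > (0 : ℝ), ∃ C : ℝ, ∀ x ∈ Ioc (0 : ℝ) b, |f x| ≤ C)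
    (hord : ∀ᶠ x in atTop, |f x| ≤ M * Real.exp (α ^ n * x ^ n))
    (F : ℝ → ℝ)
    (hF : F = fun y => ∫ x in Ioi (0 : ℝ), x ^ (n - 1) * Real.exp (-(x ^ n * y ^ n)) * f x) :
    (∀ y ∈ Ioi α, DifferentiableAt ℝ F y) ∧
      ∀ y : ℝ, α < y →
        (1 / y ^ (n - 1)) * deriv F y
          = -n * ∫ x in Ioi (0 : ℝ), x ^ (2 * n - 1) * Real.exp (-(x ^ n * y ^ n)) * f x := by
  have hn_pos : 0 < n := hn ▸ Nat.two_pow_pos k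
  have hF_deriv (y : ℝ) (hy : α < y) :
      HasDerivAt F (-n * y ^ (n - 1) * lnTransform n (2 * n - 1) f y) y := by
    rw [show 2 * n - 1 = n - 1 + n by omega]
    exact hF ▸ hasDerivAt_lnTransform hn_pos (n - 1) hα.le hf hloc hord hy
  refine ⟨fun y hy => (hF_deriv y hy).differentiableAt, fun y hy => ?_⟩
  have hy_pow : y ^ (n - 1) ≠ 0 := pow_ne_zero _ (hα.trans hy).ne'
  calc 1 / y ^ (n - 1) * deriv F y = -n * lnTransform n (2 * n - 1) f y := by
        rw [(hF_deriv y hy).deriv]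
        field_simp
    _ = _ := rfl

/-- For `n = 2^k`, if `f` is piecewise continuous on `(0,∞)` (formalized: measurable and
bounded on bounded subintervals) and of exponential order `exp(αⁿ xⁿ)` for some `α > 0`,
then its `Lₙ`-transform `F(y) = ∫₀^∞ x^{n-1} exp(-xⁿ yⁿ) f(x) dx` is differentiable on
`(α,∞)` and satisfies `(δ̄_y F)(y) = (1/y^{n-1}) F'(y) = -n ∫₀^∞ x^{2n-1} exp(-xⁿ yⁿ) f(x) dx`
for all `y > α`. -/
theorem Ln_deriv (k n : ℕ) (hn : n = 2 ^ k) (a : ℝ) (ha : 0 < a)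
    (f : ℝ → ℝ) (α M : ℝ) (hα : 0 < α) (hM : 0 < M)
    (hf : Measurable f)
    (hloc : ∀ b > (0 : ℝ), ∃ C : ℝ, ∀ x ∈ Ioc (0 : ℝ) b, |f x| ≤ C)
    (hord : ∀ᶠ x in atTop, |f x| ≤ M * Real.exp (α ^ n * x ^ n))
    (F : ℝ → ℝ)
    (hF : F = fun y => ∫ x in Ioi (0 : ℝ), x ^ (n - 1) * Real.exp (-(x ^ n * y ^ n)) * f x) :
    (∀ y ∈ Ioi α, DifferentiableAt ℝ F y) ∧
      ∀ y : ℝ, α < y →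
        (1 / y ^ (n - 1)) * deriv F y
          = -n * ∫ x in Ioi (0 : ℝ), x ^ (2 * n - 1) * Real.exp (-(x ^ n * y ^ n)) * f x :=
  Ln_deriv_general k n hn f α M hα hf hloc hord F hF
end
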